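/- arXiv:1908.04922 — 3 statements merged into one kernel-verified Lean document; each statement's English description precedes it below -/
import Mathlib

section
/- Bounded non-expanding recursion on notations preserves size bounds: let h : ({0,1}*)^k → {0,1}* and g₀, g₁ : {0,1}* × {0,1}* × ({0,1}*)^k → {0,1}* and define f by f(ε, y) = h(y) and f(a.x, y) = g_a(x, f(x,y), y). Suppose there exist integers T₁(g_a) and T_{t+2}(g_a) (for t = 1..k) and constants c_{g_a} ≥ 0 with T₂(g_a) ≤ 0 for a ∈ {0,1}, such that |g_a(x, z, y)| ≤ max(T₁(g_a) + |x|, T₂(g_a) + |z|, max_t (T_{t+2}(g_a) + |y_t|), c_{g_a}), and suppose |h(y)| ≤ max(max_t (T_t(h) + |y_t|), c_h). Then for all x and y, |f(x, y)| ≤ max(T₁(f) + |x|, max_{t≥1} (T_{t+1}(f) + |y_t|), c_f), where T₁(f) = max(T₁(g₀), T₁(g₁), T₂(g₀), T₂(g₁)), T_{t+1}(f) = max(T_{t+2}(g₀), T_{t+2}(g₁), T_t(h), T₂(g₀), T₂(g₁)), and c_f = max(c_{g₀}, c_{g₁}, c_h). -/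
/-- Length of a binary string, viewed in the tropical semiring ℤ ∪ {−∞}. -/
def tlen (x : List Bool) : WithBot ℤ := ((x.length : ℤ) : WithBot ℤ)

lemma tlen_cons_le (a : Bool) (x : List Bool) : tlen x ≤ tlen (a :: x) := by
  unfold tlen
  exact_mod_cast Nat.le_succ x.length

/-- Case 1 of tropical tiering for primitive recursion on notations:
bounded non-expanding recursion on notations preserves size bounds. -/
theorem tropical_recursion_notations_case1 {k : ℕ}
    (h : (Fin k → List Bool) → List Bool)
    (g : Bool → List Bool → List Bool → (Fin k → List Bool) → List Bool)
    (f : List Bool → (Fin k → List Bool) → List Bool)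
    (T1 T2 : Bool → WithBot ℤ) (Tg : Bool → Fin k → WithBot ℤ) (Th : Fin k → WithBot ℤ)
    (cg : Bool → ℕ) (ch : ℕ)
    (hT2 : ∀ a, T2 a ≤ 0)
    (hg : ∀ a x z (y : Fin k → List Bool),
      tlen (g a x z y) ≤
        max (max (T1 a + tlen x) (T2 a + tlen z))
          (max (Finset.univ.sup fun t => Tg a t + tlen (y t)) ((cg a : ℤ) : WithBot ℤ)))
    (hh : ∀ y : Fin k → List Bool,
      tlen (h y) ≤ max (Finset.univ.sup fun t => Th t + tlen (y t)) ((ch : ℤ) : WithBot ℤ))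
    (hf0 : ∀ y, f [] y = h y)
    (hfs : ∀ a x y, f (a :: x) y = g a x (f x y) y) :
    ∀ x y, tlen (f x y) ≤
      max (max ((max (max (T1 false) (T1 true)) (max (T2 false) (T2 true))) + tlen x)
            (Finset.univ.sup fun t =>
              (max (max (Tg false t) (Tg true t))
                (max (Th t) (max (T2 false) (T2 true)))) + tlen (y t)))
        ((max (max (cg false) (cg true)) ch : ℤ) : WithBot ℤ) := by
  intro x y
  induction x with
  | nil =>
      rw [hf0]
      refine le_trans (hh y) ?_
      apply max_le
      · refine le_max_of_le_left (le_max_of_le_right ?_)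
        refine Finset.sup_mono_fun fun t _ => ?_
        exact add_le_add_left (le_max_of_le_right (le_max_left _ _)) _
      · refine le_max_of_le_right ?_
        exact_mod_cast le_max_right (max (cg false) (cg true)) ch
  | cons a x ih =>
      rw [hfs]
      refine le_trans (hg a x (f x y) y) ?_
      have hT1 : T1 a ≤ max (max (T1 false) (T1 true)) (max (T2 false) (T2 true)) := by
        cases a
        · exact le_max_of_le_left (le_max_left _ _)
        · exact le_max_of_le_left (le_max_right _ _)
      have hT2' : T2 a ≤ max (max (T2 false) (T2 true)) (max (T2 false) (T2 true)) := by
        cases a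
        · exact le_max_of_le_left (le_max_left _ _)
        · exact le_max_of_le_left (le_max_right _ _)
      apply max_le
      · apply max_le
        · refine le_max_of_le_left (le_max_of_le_left ?_)
          exact add_le_add hT1 (tlen_cons_le a x)
        · -- T2 a + tlen (f x y) ≤ bound
          calc T2 a + tlen (f x y)
              ≤ 0 + tlen (f x y) := add_le_add_left (hT2 a) _
            _ = tlen (f x y) := zero_add _
            _ ≤ _ := ih
            _ ≤ _ := by
                refine max_le_max (max_le_max ?_ le_rfl) le_rfl
                exact add_le_add_right (tlen_cons_le a x) _
      · apply max_le
        · refine le_max_of_le_left (le_max_of_le_right ?_)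
          refine Finset.sup_mono_fun fun t _ => ?_
          refine add_le_add_left ?_ _
          cases a
          · exact le_max_of_le_left (le_max_left _ _)
          · exact le_max_of_le_left (le_max_right _ _)
        · refine le_max_of_le_right ?_
          have : (cg a : ℤ) ≤ ((max (max (cg false) (cg true)) ch : ℕ) : ℤ) := by
            cases a <;> exact_mod_cast le_max_of_le_left (by simp)
          exact_mod_cast this
end

section
/- Linear-scanning recursion is size-bounded: let g₀, g₁ satisfy |g_a(x, z, y)| ≤ max(|x| + T₁(g_a), |z| + T₂(g_a), c_{g_a}) with T₁(g_a) ≤ 0 and T₂(g_a) ≤ 1 for a ∈ {0,1}, and let h satisfy |h(y)| ≤ c_h. Define f by f(ε, y) = h(y) and f(a.x, y) = g_a(x, f(x,y), y). Then for all strings x and y, |f(x, y)| ≤ |x| + max(0, c_{g₀}, c_{g₁}, c_h). -/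
/-- Case 2 of tropical tiering (linear scanning): each recursive step adds at most
one symbol, so the result is bounded by |x| plus a constant. -/
theorem tropical_recursion_notations_case2 {k : ℕ}
    (h : (Fin k → List Bool) → List Bool)
    (g : Bool → List Bool → List Bool → (Fin k → List Bool) → List Bool)
    (f : List Bool → (Fin k → List Bool) → List Bool)
    (T1 T2 : Bool → ℤ) (cg : Bool → ℕ) (ch : ℕ)
    (hT1 : ∀ a, T1 a ≤ 0) (hT2 : ∀ a, T2 a ≤ 1)
    (hg : ∀ a x z (y : Fin k → List Bool),
      ((g a x z y).length : ℤ) ≤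
        max (max ((x.length : ℤ) + T1 a) ((z.length : ℤ) + T2 a)) (cg a : ℤ))
    (hh : ∀ y : Fin k → List Bool, (h y).length ≤ ch)
    (hf0 : ∀ y, f [] y = h y)
    (hfs : ∀ a x y, f (a :: x) y = g a x (f x y) y) :
    ∀ x y, ((f x y).length : ℤ) ≤
      (x.length : ℤ) + max 0 (max (max (cg false) (cg true)) ch : ℤ) := by
  intro x
  induction x with
  | nil =>
    intro y
    rw [hf0]
    have := hh y
    simp only [List.length_nil, Nat.cast_zero, zero_add]
    calc ((h y).length : ℤ) ≤ (ch : ℤ) := by exact_mod_cast this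
    _ ≤ _ := le_max_of_le_right (le_max_of_le_right le_rfl)
  | cons a x ih =>
    intro y
    rw [hfs]
    have h1 := hg a x (f x y) y
    have h2 := ih y
    have hcg : (cg a : ℤ) ≤ ((max (max (cg false) (cg true)) ch : ℕ) : ℤ) := by
      cases a <;> push_cast <;> omega
    have hT1' := hT1 a
    have hT2' := hT2 a
    simp only [List.length_cons, Nat.cast_add, Nat.cast_one]
    omega
end

section
/- Recursion on values with a non-expanding step: let g satisfy |g(x, z, y)| ≤ max(T₁(g) + |x|, T₂(g) + |z|, max_t (T_{t+2}(g) + |y_t|), c_g) with T₂(g) ≤ 0, and h satisfy |h(y)| ≤ max(max_t (T_t(h) + |y_t|), c_h). Define f by f(ε, y) = h(y) and f(s(x), y) = g(x, f(x,y), y), where s is the numerical successor on binary encodings. Then |f(x, y)| ≤ max(max(T₁(g), T₂(g)) + |x|, max_t (max(T_{t+2}(g), T_t(h), T₂(g)) + |y_t|), c_g, c_h) for all x, y. -/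
/-- The standard binary encoding of natural numbers, E(0) = ε. -/
def encodeBin (n : ℕ) : List Bool := Nat.bits n

lemma tlen_encode_mono {m n : ℕ} (hmn : m ≤ n) :
    tlen (encodeBin m) ≤ tlen (encodeBin n) := by
  unfold tlen encodeBin
  have := Nat.size_le_size hmn
  rw [← Nat.size_eq_bits_len m, ← Nat.size_eq_bits_len n] at this
  exact_mod_cast this

/-- Recursion on values with a non-expanding step (tropical tiering for primitive
recursion on values): f(ε,y) = h(y), f(s(x),y) = g(x, f(x,y), y), where recursion on
values amounts to recursion on ℕ transported through the encoding E. -/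
theorem tropical_recursion_values {k : ℕ}
    (h : (Fin k → List Bool) → List Bool)
    (g : List Bool → List Bool → (Fin k → List Bool) → List Bool)
    (f : List Bool → (Fin k → List Bool) → List Bool)
    (T1 T2 : WithBot ℤ) (Tg : Fin k → WithBot ℤ) (Th : Fin k → WithBot ℤ)
    (cg ch : ℕ)
    (hT2 : T2 ≤ 0)
    (hg : ∀ x z (y : Fin k → List Bool),
      tlen (g x z y) ≤
        max (max (T1 + tlen x) (T2 + tlen z))
          (max (Finset.univ.sup fun t => Tg t + tlen (y t)) ((cg : ℤ) : WithBot ℤ)))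
    (hh : ∀ y : Fin k → List Bool,
      tlen (h y) ≤ max (Finset.univ.sup fun t => Th t + tlen (y t)) ((ch : ℤ) : WithBot ℤ))
    (hf0 : ∀ y, f (encodeBin 0) y = h y)
    (hfs : ∀ n y, f (encodeBin (n + 1)) y = g (encodeBin n) (f (encodeBin n) y) y) :
    ∀ (n : ℕ) (y : Fin k → List Bool),
      tlen (f (encodeBin n) y) ≤
        max (max (max T1 T2 + tlen (encodeBin n))
              (Finset.univ.sup fun t => max (Tg t) (max (Th t) T2) + tlen (y t)))
          ((max cg ch : ℤ) : WithBot ℤ) := by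
  have hcch : ((ch : ℤ) : WithBot ℤ) ≤ ((max cg ch : ℤ) : WithBot ℤ) := by
    exact_mod_cast le_max_right cg ch
  have hccg : ((cg : ℤ) : WithBot ℤ) ≤ ((max cg ch : ℤ) : WithBot ℤ) := by
    exact_mod_cast le_max_left cg ch
  intro n
  induction n with
  | zero =>
    intro y
    rw [hf0]
    refine (hh y).trans ?_
    apply max_le
    · refine le_trans ?_ (le_max_left _ _)
      refine le_trans ?_ (le_max_right _ _)
      apply Finset.sup_mono_fun
      intro t _
      exact add_le_add_left (le_trans (le_max_left _ _) (le_max_right _ _)) _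
    · exact le_trans hcch (le_max_right _ _)
  | succ n ih =>
    intro y
    rw [hfs]
    refine (hg (encodeBin n) (f (encodeBin n) y) y).trans ?_
    have hmono : tlen (encodeBin n) ≤ tlen (encodeBin (n + 1)) :=
      tlen_encode_mono (Nat.le_succ n)
    apply max_le
    · apply max_le
      · refine le_trans ?_ (le_max_left _ _)
        refine le_trans ?_ (le_max_left _ _)
        exact add_le_add (le_max_left _ _) hmono
      · have h1 : T2 + tlen (f (encodeBin n) y) ≤ tlen (f (encodeBin n) y) := by
          calc T2 + tlen (f (encodeBin n) y) ≤ 0 + tlen (f (encodeBin n) y) :=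
                add_le_add_left hT2 _
            _ = _ := zero_add _
        refine h1.trans ((ih y).trans ?_)
        apply max_le
        · refine le_trans ?_ (le_max_left _ _)
          apply max_le
          · exact le_trans (add_le_add_right hmono _) (le_max_left _ _)
          · exact le_max_right _ _
        · exact le_max_right _ _
    · apply max_le
      · refine le_trans ?_ (le_max_left _ _)
        refine le_trans ?_ (le_max_right _ _)
        apply Finset.sup_mono_fun
        intro t _
        exact add_le_add_left (le_max_left _ _) _
      · exact le_trans hccg (le_max_right _ _)
end
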